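/- arXiv:1607.06224 — 5 statements merged into one kernel-verified Lean document; each statement's English description precedes it below -/
import Mathlib

section
/- Let (L_j)_{j≥0} be a sequence of nonnegative real numbers in ℓ^p for some p > 1. Then ∑_{k≥0} sup_{h≥1} (h^{-1} ∑_{j=k-h+1}^{k} L_j)^p ≤ C_p ∑_{j} L_j^p, where C_p depends only on p and L_j is taken to be 0 for j < 0. -/
/-!
For each `k` fix a window length `r k` at which the supremum is attained (windows longer than
`k + 1` only add zeros), so that it suffices to bound `∑ₖ A k ^ p` for the averages
`A k` of `L` over arbitrary windows `[k - r k + 1, k]`.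

One-sided windows obey a covering lemma with constant `1`: the window of the rightmost point
contains every point it meets, and the windows of all points to its left are disjoint from it.
This gives the weak-type bound `t / 2 · #{A > t} ≤ ∑_{L > t / 2} L`. Decomposing into dyadic
levels, `A ^ p ≤ 2 ^ p ∑_{2 ^ n < A} 2 ^ (n p)`; applying the weak-type bound at each level
and exchanging the sums leaves, for each `j`, the geometric sum `∑_{2 ^ n < 2 L j} 2 ^ (n (p - 1))`,
which is at most a constant times `L j ^ (p - 1)`.
-/

open Real Finset

namespace OneSidedMaximal

noncomputable def window (k : ℤ) (h : ℕ) : Finset ℤ := Icc (k - h + 1) k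

noncomputable def windowAvg (L : ℤ → ℝ) (k : ℤ) (h : ℕ) : ℝ := (h : ℝ)⁻¹ * ∑ j ∈ window k h, L j

theorem windowAvg_nonneg {L : ℤ → ℝ} (hL : ∀ j, 0 ≤ L j) (k : ℤ) (h : ℕ) :
    0 ≤ windowAvg L k h :=
  mul_nonneg (by positivity) (sum_nonneg fun j _ => hL j)

theorem card_window (k : ℤ) (h : ℕ) : #(window k h) = h := by
  simp [window, Int.card_Icc]

theorem mul_card_le_sum_biUnion_window {G : ℤ → ℝ} (hG : ∀ j, 0 ≤ G j) {μ : ℝ} (hμ : 0 ≤ μ)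
    (r : ℤ → ℕ) (E : Finset ℤ) (hE : ∀ k ∈ E, μ * r k < ∑ j ∈ window k (r k), G j) :
    μ * #E ≤ ∑ j ∈ E.biUnion (fun k => window k (r k)), G j := by
  classical
  induction E using Finset.strongInduction with
  | H E ih =>
  rcases E.eq_empty_or_nonempty with rfl | hne
  · simp
  set k₀ := E.max' hne
  have hk₀ : k₀ ∈ E := E.max'_mem hne
  have hr : 0 < r k₀ := by
    by_contra! h
    simpa [Nat.le_zero.mp h, window] using hE k₀ hk₀
  set E' := E.filter (· < k₀ - r k₀ + 1)
  have hE' : E' ⊂ E := filter_ssubset.mpr ⟨k₀, hk₀, by omega⟩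
  have hcard : #E ≤ #E' + r k₀ := by
    have hrest : E.filter (¬ · < k₀ - r k₀ + 1) ⊆ window k₀ (r k₀) := fun k hk => by
      rw [mem_filter] at hk
      have := E.le_max' k hk.1
      simp only [window, mem_Icc]
      omega
    calc #E = #E' + #(E.filter (¬ · < k₀ - r k₀ + 1)) :=
          (card_filter_add_card_filter_not _).symm
      _ ≤ #E' + r k₀ := by
          grw [card_le_card hrest, card_window]
  have hdisj : Disjoint (window k₀ (r k₀)) (E'.biUnion fun k => window k (r k)) := by
    simp only [disjoint_biUnion_right]
    intro k hk
    have hk := (mem_filter.mp hk).2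
    refine disjoint_left.mpr fun j hj hj' => ?_
    simp only [window, mem_Icc] at hj hj'
    omega
  have hsub : window k₀ (r k₀) ∪ E'.biUnion (fun k => window k (r k)) ⊆
      E.biUnion (fun k => window k (r k)) :=
    union_subset (subset_biUnion_of_mem (fun k => window k (r k)) hk₀)
      (biUnion_subset_biUnion_of_subset_left _ hE'.1)
  calc μ * #E ≤ μ * r k₀ + μ * #E' := by
        rw [← mul_add]
        exact mul_le_mul_of_nonneg_left (by exact_mod_cast hcard.trans_eq (add_comm _ _)) hμ
    _ ≤ ∑ j ∈ window k₀ (r k₀), G j + ∑ j ∈ E'.biUnion (fun k => window k (r k)), G j :=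
        add_le_add (hE k₀ hk₀).le (ih E' hE' fun k hk => hE k (mem_filter.mp hk).1)
    _ = ∑ j ∈ window k₀ (r k₀) ∪ E'.biUnion (fun k => window k (r k)), G j :=
        (sum_union hdisj).symm
    _ ≤ _ := sum_le_sum_of_subset_of_nonneg hsub fun j _ _ => hG j

theorem mul_lt_sum_window_of_lt_windowAvg {L : ℤ → ℝ} {t : ℝ} (ht : 0 ≤ t) {k : ℤ} {h : ℕ}
    (hlt : t < windowAvg L k h) :
    t / 2 * h < ∑ j ∈ window k h, if t < 2 * L j then L j else 0 := by
  have hh : (0 : ℝ) < h := by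
    rcases Nat.eq_zero_or_pos h with rfl | hpos
    · simp [windowAvg] at hlt; linarith
    · exact_mod_cast hpos
  have hsum : t * h < ∑ j ∈ window k h, L j := by
    rwa [windowAvg, lt_inv_mul_iff₀ hh, mul_comm] at hlt
  have hsplit : ∑ j ∈ window k h, L j ≤
      ∑ j ∈ window k h, ((if t < 2 * L j then L j else 0) + t / 2) :=
    sum_le_sum fun j _ => by split_ifs <;> linarith
  rw [sum_add_distrib, sum_const, card_window, nsmul_eq_mul] at hsplit
  linarith

theorem mul_card_lt_windowAvg_le {L : ℤ → ℝ} (hL : ∀ j, 0 ≤ L j) {t : ℝ} (ht : 0 ≤ t)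
    (r : ℤ → ℕ) (F : Finset ℤ) :
    t / 2 * #(F.filter fun k => t < windowAvg L k (r k)) ≤
      ∑ j ∈ F.biUnion (fun k => window k (r k)), if t < 2 * L j then L j else 0 := by
  have hG : ∀ j, 0 ≤ if t < 2 * L j then L j else 0 := fun j => by
    split_ifs
    exacts [hL j, le_rfl]
  refine (mul_card_le_sum_biUnion_window hG (by positivity) r _
    fun k hk => mul_lt_sum_window_of_lt_windowAvg ht (mem_filter.mp hk).2).trans ?_
  exact sum_le_sum_of_subset_of_nonneg
    (biUnion_subset_biUnion_of_subset_left _ (filter_subset _ _)) fun j _ _ => hG j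

theorem sum_zpow_le_of_forall_le {a : ℝ} (ha : 1 < a) (S : Finset ℤ) {m : ℤ}
    (hS : ∀ n ∈ S, n ≤ m) : ∑ n ∈ S, a ^ n ≤ a ^ m / (1 - a⁻¹) := by
  have ha₀ : 0 < a := one_pos.trans ha
  have hρ : 0 < 1 - a⁻¹ := sub_pos.mpr (inv_lt_one_of_one_lt₀ ha)
  induction S using Finset.induction_on_max generalizing m with
  | empty => simp; positivity
  | insert n S hlt ih =>
    have hn : n ∉ S := fun h => (hlt n h).false
    rw [sum_insert hn]
    calc a ^ n + ∑ i ∈ S, a ^ i ≤ a ^ n + a ^ (n - 1) / (1 - a⁻¹) := by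
          grw [ih fun i hi => Int.le_sub_one_of_lt (hlt i hi)]
      _ = a ^ n / (1 - a⁻¹) := by
          rw [zpow_sub_one₀ ha₀.ne', eq_div_iff hρ.ne', add_mul, div_mul_cancel₀ _ hρ.ne']
          ring
      _ ≤ a ^ m / (1 - a⁻¹) := by
          grw [zpow_le_zpow_right₀ ha.le (hS n (mem_insert_self n S))]

theorem two_zpow_rpow_comm (n : ℤ) (q : ℝ) : ((2 : ℝ) ^ n) ^ q = ((2 : ℝ) ^ q) ^ n := by
  rw [← rpow_intCast_mul zero_le_two, ← rpow_mul_intCast zero_le_two, mul_comm]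

theorem sum_dyadic_rpow_le {q x : ℝ} (hq : 0 < q) (hx : 0 ≤ x) (S : Finset ℤ) :
    ∑ n ∈ S with (2 : ℝ) ^ n < x, ((2 : ℝ) ^ n) ^ q ≤ x ^ q / (1 - 2 ^ (-q)) := by
  have hρ : 0 < 1 - (2 : ℝ) ^ (-q) :=
    sub_pos.mpr (rpow_lt_one_of_one_lt_of_neg one_lt_two (neg_neg_of_pos hq))
  set T := S.filter fun n => (2 : ℝ) ^ n < x
  rcases T.eq_empty_or_nonempty with hT | hT
  · rw [hT, sum_empty]
    exact div_nonneg (rpow_nonneg hx q) hρ.le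
  calc ∑ n ∈ T, ((2 : ℝ) ^ n) ^ q = ∑ n ∈ T, ((2 : ℝ) ^ q) ^ n :=
        sum_congr rfl fun n _ => two_zpow_rpow_comm n q
    _ ≤ ((2 : ℝ) ^ q) ^ T.max' hT / (1 - ((2 : ℝ) ^ q)⁻¹) :=
        sum_zpow_le_of_forall_le (one_lt_rpow one_lt_two hq) T fun n hn => T.le_max' n hn
    _ = ((2 : ℝ) ^ T.max' hT) ^ q / (1 - 2 ^ (-q)) := by
        rw [two_zpow_rpow_comm, rpow_neg zero_le_two]
    _ ≤ x ^ q / (1 - 2 ^ (-q)) := by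
        gcongr
        exact (mem_filter.mp (T.max'_mem hT)).2.le

/-- `Int.clog 2 x - 1` is the dyadic level `n` with `2 ^ n < x ≤ 2 ^ (n + 1)`. -/
theorem rpow_le_two_rpow_mul_sum_dyadic {p x : ℝ} (hp : 0 < p) (hx : 0 ≤ x) {N : Finset ℤ}
    (hN : Int.clog 2 x - 1 ∈ N) :
    x ^ p ≤ 2 ^ p * ∑ n ∈ N with (2 : ℝ) ^ n < x, ((2 : ℝ) ^ n) ^ p := by
  rcases hx.eq_or_lt with rfl | hx
  · rw [zero_rpow hp.ne']
    exact mul_nonneg (by positivity) (sum_nonneg fun n _ => by positivity)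
  set n := Int.clog 2 x - 1
  have hlow : (2 : ℝ) ^ n < x := by exact_mod_cast Int.zpow_pred_clog_lt_self one_lt_two hx
  have hup : x ≤ 2 * 2 ^ n := by
    have := Int.self_le_zpow_clog (R := ℝ) one_lt_two x
    rwa [Nat.cast_ofNat, ← Int.sub_add_cancel (Int.clog 2 x) 1, zpow_add_one₀ two_ne_zero,
      mul_comm] at this
  calc x ^ p ≤ (2 * 2 ^ n) ^ p := rpow_le_rpow hx.le hup hp.le
    _ = 2 ^ p * ((2 : ℝ) ^ n) ^ p := mul_rpow zero_le_two (by positivity)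
    _ ≤ 2 ^ p * ∑ n ∈ N with (2 : ℝ) ^ n < x, ((2 : ℝ) ^ n) ^ p := by
        gcongr
        exact single_le_sum (f := fun n : ℤ => ((2 : ℝ) ^ n) ^ p) (fun _ _ => by positivity)
          (mem_filter.mpr ⟨hN, hlow⟩)

theorem sum_windowAvg_rpow_le {L : ℤ → ℝ} (hL : ∀ j, 0 ≤ L j) {p : ℝ} (hp : 1 < p)
    (r : ℤ → ℕ) (F : Finset ℤ) :
    ∑ k ∈ F, windowAvg L k (r k) ^ p ≤
      4 ^ p / (1 - 2 ^ (1 - p)) * ∑ j ∈ F.biUnion (fun k => window k (r k)), L j ^ p := by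
  set A : ℤ → ℝ := fun k => windowAvg L k (r k)
  set U := F.biUnion fun k => window k (r k)
  set N := F.image fun k => Int.clog 2 (A k) - 1
  set G : ℤ → ℤ → ℝ := fun n j => if (2 : ℝ) ^ n < 2 * L j then L j else 0
  have hp₀ : 0 < p := by linarith
  have hp₁ : 0 < p - 1 := by linarith
  have hlevels : ∑ k ∈ F, A k ^ p ≤
      2 ^ p * ∑ n ∈ N, ((2 : ℝ) ^ n) ^ p * #(F.filter fun k => (2 : ℝ) ^ n < A k) := by
    calc ∑ k ∈ F, A k ^ p
        ≤ ∑ k ∈ F, 2 ^ p * ∑ n ∈ N with (2 : ℝ) ^ n < A k, ((2 : ℝ) ^ n) ^ p :=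
          sum_le_sum fun k hk => rpow_le_two_rpow_mul_sum_dyadic hp₀ (windowAvg_nonneg hL _ _)
            (mem_image_of_mem _ hk)
      _ = _ := by
          rw [← mul_sum]
          congr 1
          simp_rw [sum_filter]
          rw [sum_comm]
          refine sum_congr rfl fun n _ => ?_
          rw [← sum_filter, sum_const, nsmul_eq_mul, mul_comm]
  have hweak : ∀ n : ℤ, ((2 : ℝ) ^ n) ^ p * #(F.filter fun k => (2 : ℝ) ^ n < A k) ≤
      2 * ((2 : ℝ) ^ n) ^ (p - 1) * ∑ j ∈ U, G n j := by
    intro n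
    have h2n : (0 : ℝ) < 2 ^ n := by positivity
    calc ((2 : ℝ) ^ n) ^ p * #(F.filter fun k => (2 : ℝ) ^ n < A k)
        = 2 * ((2 : ℝ) ^ n) ^ (p - 1) *
            ((2 : ℝ) ^ n / 2 * #(F.filter fun k => (2 : ℝ) ^ n < A k)) := by
          rw [rpow_sub_one h2n.ne']
          field_simp
      _ ≤ _ := by
          gcongr
          exact mul_card_lt_windowAvg_le hL h2n.le r F
  have hgeom : ∀ j, ∑ n ∈ N, ((2 : ℝ) ^ n) ^ (p - 1) * G n j ≤
      2 ^ (p - 1) / (1 - 2 ^ (1 - p)) * L j ^ p := by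
    intro j
    have hLj := hL j
    calc ∑ n ∈ N, ((2 : ℝ) ^ n) ^ (p - 1) * G n j
        = (∑ n ∈ N with (2 : ℝ) ^ n < 2 * L j, ((2 : ℝ) ^ n) ^ (p - 1)) * L j := by
          simp_rw [G, mul_ite, mul_zero]
          rw [← sum_filter, sum_mul]
      _ ≤ (2 * L j) ^ (p - 1) / (1 - 2 ^ (-(p - 1))) * L j := by
          gcongr
          exact sum_dyadic_rpow_le hp₁ (by positivity) N
      _ = 2 ^ (p - 1) / (1 - 2 ^ (1 - p)) * L j ^ p := by
          have hpow : L j ^ p = L j ^ (p - 1) * L j := by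
            rw [← rpow_add_one' hLj (by linarith), sub_add_cancel]
          rw [mul_rpow zero_le_two hLj, neg_sub, hpow]
          ring
  calc ∑ k ∈ F, A k ^ p
      ≤ 2 ^ p * ∑ n ∈ N, 2 * ((2 : ℝ) ^ n) ^ (p - 1) * ∑ j ∈ U, G n j := by
        grw [hlevels, sum_le_sum fun n _ => hweak n]
    _ = 2 ^ p * 2 * ∑ j ∈ U, ∑ n ∈ N, ((2 : ℝ) ^ n) ^ (p - 1) * G n j := by
        simp_rw [mul_sum]
        rw [sum_comm]
        simp_rw [mul_assoc]
    _ ≤ 2 ^ p * 2 * ∑ j ∈ U, 2 ^ (p - 1) / (1 - 2 ^ (1 - p)) * L j ^ p := by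
        gcongr with j
        exact hgeom j
    _ = 4 ^ p / (1 - 2 ^ (1 - p)) * ∑ j ∈ U, L j ^ p := by
        rw [← mul_sum, ← mul_assoc, rpow_sub_one two_ne_zero,
          show (4 : ℝ) = 2 * 2 by norm_num, mul_rpow zero_le_two zero_le_two]
        ring

theorem windowAvg_le_windowAvg_add_one {L : ℤ → ℝ} (hL : ∀ j, 0 ≤ L j)
    (hL₀ : ∀ j < 0, L j = 0) {k h : ℕ} (hkh : k + 1 ≤ h) :
    windowAvg L k h ≤ windowAvg L k (k + 1) := by
  have hsub : window k (k + 1) ⊆ window k h := Icc_subset_Icc (by omega) le_rfl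
  have hsum : ∑ j ∈ window k h, L j = ∑ j ∈ window k (k + 1), L j := by
    refine (sum_subset hsub fun j hj hj' => hL₀ j ?_).symm
    simp only [window, mem_Icc] at hj hj'
    omega
  rw [windowAvg, windowAvg, hsum]
  gcongr
  exact sum_nonneg fun j _ => hL j

theorem exists_forall_windowAvg_le {L : ℤ → ℝ} (hL : ∀ j, 0 ≤ L j) (hL₀ : ∀ j < 0, L j = 0)
    (k : ℕ) : ∃ r, ∀ h : ℕ+, windowAvg L k h ≤ windowAvg L k r := by
  obtain ⟨r, -, hr⟩ := (Icc 1 (k + 1)).exists_max_image (windowAvg L k) ⟨1, by simp⟩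
  refine ⟨r, fun h => ?_⟩
  rcases le_or_gt (h : ℕ) (k + 1) with hle | hlt
  · exact hr h (mem_Icc.mpr ⟨h.pos, hle⟩)
  · exact (windowAvg_le_windowAvg_add_one hL hL₀ hlt.le).trans (hr _ (by simp))

end OneSidedMaximal

open OneSidedMaximal

/-- Discrete one-sided Hardy–Littlewood maximal inequality in `ℓ^p`. -/
theorem stmt_3 (p : ℝ) (hp : 1 < p) :
    ∃ C : ℝ, 0 < C ∧
      ∀ L : ℤ → ℝ, (∀ j, 0 ≤ L j) → (∀ j < (0:ℤ), L j = 0) →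
        Summable (fun j : ℤ => L j ^ p) →
        ∑' k : ℕ, (⨆ h : ℕ+, ((h : ℝ)⁻¹ * ∑ j ∈ Finset.Icc ((k : ℤ) - (h : ℤ) + 1) (k : ℤ), L j) ^ p)
          ≤ C * ∑' j : ℤ, L j ^ p := by
  have hC : (0 : ℝ) < 4 ^ p / (1 - 2 ^ (1 - p)) :=
    div_pos (by positivity) (sub_pos.mpr (rpow_lt_one_of_one_lt_of_neg one_lt_two (by linarith)))
  refine ⟨_, hC, fun L hL hL₀ hsum => tsum_le_of_sum_le'
    (mul_nonneg hC.le (tsum_nonneg fun j => rpow_nonneg (hL j) p)) fun F => ?_⟩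
  choose r hr using exists_forall_windowAvg_le hL hL₀
  calc ∑ k ∈ F, ⨆ h : ℕ+, windowAvg L k h ^ p
      ≤ ∑ k ∈ F, windowAvg L k (r k) ^ p := by
        gcongr with k
        exact ciSup_le fun h => rpow_le_rpow (windowAvg_nonneg hL _ _) (hr k h) (by linarith)
    _ = ∑ k ∈ F.image (Nat.cast : ℕ → ℤ), windowAvg L k (r k.toNat) ^ p := by
        rw [sum_image fun _ _ _ _ h => Nat.cast_injective h]
        simp
    _ ≤ _ := sum_windowAvg_rpow_le hL hp _ _
    _ ≤ _ := by
        gcongr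
        exact hsum.sum_le_tsum _ fun j _ => rpow_nonneg (hL j) p
end

section
/- Let K(f)(x) = (1/2)(f(x/2) + f((x+1)/2)) be the doubling-average transition operator on functions of bounded variation on [0,1]. Then for every function f of bounded variation, the total variation of K^n(f) satisfies |d K^n f| ≤ 2^{-n} |d f|, and consequently ‖K^n f − ∫₀¹ f dλ‖_∞ ≤ 2^{-n} |d f|, where λ is Lebesgue measure. -/
/-! The branches `x ↦ x / 2` and `x ↦ (x + 1) / 2` map `[0, 1]` monotonically onto `[0, 1/2]` and
`[1/2, 1]`, so the variations of the two terms of `K g` on `[0, 1]` add up to the variation of `g`,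
and the factor `1/2` halves it. By the same change of variables `K` preserves `∫₀¹`, and a function
of variation `V` on `[0, 1]` stays within `V` of its mean. -/

open MeasureTheory Set
open scoped ENNReal

section Variation

variable {α E : Type*} [LinearOrder α] [SeminormedAddCommGroup E]

theorem eVariationOn_add_le (f g : α → E) (s : Set α) :
    eVariationOn (f + g) s ≤ eVariationOn f s + eVariationOn g s := by
  refine iSup_le fun ⟨n, u, hu, us⟩ => ?_
  calc ∑ i ∈ Finset.range n, edist ((f + g) (u (i + 1))) ((f + g) (u i))
      ≤ ∑ i ∈ Finset.range n,
          (edist (f (u (i + 1))) (f (u i)) + edist (g (u (i + 1))) (g (u i))) :=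
        Finset.sum_le_sum fun i _ => edist_add_add_le _ _ _ _
    _ ≤ eVariationOn f s + eVariationOn g s := by
        rw [Finset.sum_add_distrib]
        exact add_le_add (eVariationOn.sum_le hu us) (eVariationOn.sum_le hu us)

theorem eVariationOn_const_smul_le [NormedSpace ℝ E] (c : ℝ) (f : α → E) (s : Set α) :
    eVariationOn (c • f) s ≤ ‖c‖₊ * eVariationOn f s :=
  (lipschitzWith_smul c).lipschitzOnWith.comp_eVariationOn_le (mapsTo_univ _ _)

end Variation

theorem eVariationOn_comp_affine {E : Type*} [PseudoEMetricSpace E] (f : ℝ → E) {c : ℝ}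
    (hc : 0 < c) (d a b : ℝ) :
    eVariationOn (fun x => f (c * x + d)) (Icc a b) =
      eVariationOn f (Icc (c * a + d) (c * b + d)) := by
  rw [← image_affine_Icc' hc]
  exact eVariationOn.comp_eq_of_monotoneOn f _ fun x _ y _ hxy => by gcongr

theorem BoundedVariationOn.comp_affine {E : Type*} [PseudoEMetricSpace E] {f : ℝ → E} {c : ℝ}
    {d a b : ℝ} (hf : BoundedVariationOn f (Icc (c * a + d) (c * b + d))) (hc : 0 < c) :
    BoundedVariationOn (fun x => f (c * x + d)) (Icc a b) := by
  rwa [BoundedVariationOn, eVariationOn_comp_affine f hc]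

theorem BoundedVariationOn.intervalIntegrable {f : ℝ → ℝ} {a b : ℝ}
    (hf : BoundedVariationOn f (uIcc a b)) : IntervalIntegrable f volume a b := by
  obtain ⟨p, q, hp, hq, rfl⟩ := hf.locallyBoundedVariationOn.exists_monotoneOn_sub_monotoneOn
  exact hp.intervalIntegrable.sub hq.intervalIntegrable

theorem BoundedVariationOn.abs_sub_integral_le {f : ℝ → ℝ} {a b x : ℝ} (hab : a ≤ b)
    (hf : BoundedVariationOn f (Icc a b)) (hx : x ∈ Icc a b) :
    |(b - a) * f x - ∫ y in a..b, f y| ≤ (b - a) * (eVariationOn f (Icc a b)).toReal := by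
  have hint : IntervalIntegrable f volume a b := by
    apply BoundedVariationOn.intervalIntegrable
    rwa [uIcc_of_le hab]
  calc |(b - a) * f x - ∫ y in a..b, f y| = |∫ y in a..b, (f x - f y)| := by
        rw [intervalIntegral.integral_sub intervalIntegrable_const hint,
          intervalIntegral.integral_const, smul_eq_mul]
    _ ≤ ∫ y in a..b, |f x - f y| := intervalIntegral.abs_integral_le_integral_abs hab
    _ ≤ ∫ _ in a..b, (eVariationOn f (Icc a b)).toReal := by
        refine intervalIntegral.integral_mono_on hab
          (intervalIntegrable_const.sub hint).abs intervalIntegrable_const fun y hy => ?_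
        rw [← Real.dist_eq]
        exact hf.dist_le hx hy
    _ = (b - a) * (eVariationOn f (Icc a b)).toReal := by
        rw [intervalIntegral.integral_const, smul_eq_mul]

noncomputable def doublingAverage (g : ℝ → ℝ) : ℝ → ℝ :=
  fun x => (g (x / 2) + g ((x + 1) / 2)) / 2

/-- The `+ 0` puts both branches in the affine form `2⁻¹ * x + d` of the change of variables
lemmas. -/
theorem doublingAverage_eq (g : ℝ → ℝ) :
    doublingAverage g =
      (2 : ℝ)⁻¹ • ((fun x => g (2⁻¹ * x + 0)) + fun x => g (2⁻¹ * x + 2⁻¹)) := by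
  ext x
  simp only [doublingAverage, Pi.smul_apply, Pi.add_apply, smul_eq_mul]
  ring_nf

theorem eVariationOn_doublingAverage_le (g : ℝ → ℝ) :
    eVariationOn (doublingAverage g) (Icc 0 1) ≤ 2⁻¹ * eVariationOn g (Icc 0 1) := by
  have hsplit := eVariationOn.Icc_add_Icc g (s := univ) (a := (0 : ℝ)) (b := 2⁻¹) (c := 1)
    (by norm_num) (by norm_num) (mem_univ _)
  simp only [univ_inter] at hsplit
  rw [doublingAverage_eq]
  calc _ ≤ ‖(2 : ℝ)⁻¹‖₊ * (eVariationOn (fun x => g (2⁻¹ * x + 0)) (Icc 0 1) +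
        eVariationOn (fun x => g (2⁻¹ * x + 2⁻¹)) (Icc 0 1)) := by
        grw [eVariationOn_const_smul_le, eVariationOn_add_le]
    _ = 2⁻¹ * eVariationOn g (Icc 0 1) := by
        rw [eVariationOn_comp_affine _ (by norm_num), eVariationOn_comp_affine _ (by norm_num)]
        norm_num [← hsplit]

theorem boundedVariationOn_doublingAverage {g : ℝ → ℝ} (hg : BoundedVariationOn g (Icc 0 1)) :
    BoundedVariationOn (doublingAverage g) (Icc 0 1) :=
  ne_top_of_le_ne_top (ENNReal.mul_ne_top (ENNReal.inv_ne_top.2 two_ne_zero) hg)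
    (eVariationOn_doublingAverage_le g)

theorem boundedVariationOn_doublingAverage_iterate {g : ℝ → ℝ}
    (hg : BoundedVariationOn g (Icc 0 1)) (n : ℕ) :
    BoundedVariationOn (doublingAverage^[n] g) (Icc 0 1) := by
  induction n with
  | zero => exact hg
  | succ n ih => rw [Function.iterate_succ_apply']; exact boundedVariationOn_doublingAverage ih

theorem eVariationOn_doublingAverage_iterate_le (g : ℝ → ℝ) (n : ℕ) :
    eVariationOn (doublingAverage^[n] g) (Icc 0 1) ≤ 2⁻¹ ^ n * eVariationOn g (Icc 0 1) := by
  induction n with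
  | zero => simp
  | succ n ih =>
    rw [Function.iterate_succ_apply', pow_succ', mul_assoc]
    exact (eVariationOn_doublingAverage_le _).trans (by gcongr)

theorem integral_doublingAverage {g : ℝ → ℝ} (hg : BoundedVariationOn g (Icc 0 1)) :
    ∫ x in (0 : ℝ)..1, doublingAverage g x = ∫ x in (0 : ℝ)..1, g x := by
  have hint : ∀ {a b : ℝ}, Icc a b ⊆ Icc 0 1 → a ≤ b → IntervalIntegrable g volume a b :=
    fun hsub hab => BoundedVariationOn.intervalIntegrable <| by
      rw [uIcc_of_le hab]; exact hg.mono hsub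
  have hint_comp : ∀ d : ℝ, d ∈ Icc (0 : ℝ) 2⁻¹ →
      IntervalIntegrable (fun x => g (2⁻¹ * x + d)) volume 0 1 := fun d ⟨hd₀, hd₁⟩ =>
    BoundedVariationOn.intervalIntegrable <| by
      rw [uIcc_of_le zero_le_one]
      refine (hg.mono (Icc_subset_Icc ?_ ?_)).comp_affine (by norm_num) <;> norm_num <;> linarith
  rw [doublingAverage_eq]
  simp only [Pi.smul_apply, Pi.add_apply, smul_eq_mul]
  rw [intervalIntegral.integral_const_mul,
    intervalIntegral.integral_add (hint_comp 0 (by norm_num)) (hint_comp 2⁻¹ (by norm_num)),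
    intervalIntegral.integral_comp_mul_add _ (by norm_num),
    intervalIntegral.integral_comp_mul_add _ (by norm_num), ← smul_add, smul_eq_mul,
    mul_inv_cancel_left₀ (by norm_num)]
  simp only [mul_zero, mul_one, add_zero, zero_add]
  rw [show (2 : ℝ)⁻¹ + 2⁻¹ = 1 by norm_num]
  exact intervalIntegral.integral_add_adjacent_intervals
    (hint (b := 2⁻¹) (Icc_subset_Icc le_rfl (by norm_num)) (by norm_num))
    (hint (a := 2⁻¹) (Icc_subset_Icc (by norm_num) le_rfl) (by norm_num))

theorem integral_doublingAverage_iterate {g : ℝ → ℝ} (hg : BoundedVariationOn g (Icc 0 1))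
    (n : ℕ) : ∫ x in (0 : ℝ)..1, doublingAverage^[n] g x = ∫ x in (0 : ℝ)..1, g x := by
  induction n with
  | zero => rfl
  | succ n ih =>
    rw [Function.iterate_succ_apply',
      integral_doublingAverage (boundedVariationOn_doublingAverage_iterate hg n), ih]

theorem stmt_6_general (f : ℝ → ℝ)
    (hbv : BoundedVariationOn f (Set.Icc 0 1))
    (K : (ℝ → ℝ) → (ℝ → ℝ))
    (hK : ∀ g x, K g x = (g (x / 2) + g ((x + 1) / 2)) / 2) (n : ℕ) :
    eVariationOn (K^[n] f) (Set.Icc 0 1) ≤ (2 : ℝ≥0∞)⁻¹ ^ n * eVariationOn f (Set.Icc 0 1) ∧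
    ∀ x ∈ Set.Icc (0:ℝ) 1,
      |K^[n] f x - ∫ y in (0:ℝ)..1, f y| ≤
        (2:ℝ)⁻¹ ^ n * (eVariationOn f (Set.Icc 0 1)).toReal := by
  obtain rfl : K = doublingAverage := funext fun g => funext (hK g)
  have hvar := eVariationOn_doublingAverage_iterate_le f n
  refine ⟨hvar, fun x hx => ?_⟩
  have hmean := (boundedVariationOn_doublingAverage_iterate hbv n).abs_sub_integral_le
    zero_le_one hx
  rw [sub_zero, one_mul, one_mul, integral_doublingAverage_iterate hbv] at hmean
  refine hmean.trans ?_
  simpa using ENNReal.toReal_mono (ENNReal.mul_ne_top (by simp) hbv) hvar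

/-- For the doubling-average operator `Kg(x) = (g(x/2)+g((x+1)/2))/2`, the total variation of
`K^n f` on `[0,1]` is at most `2^{-n}` times that of `f`, and `K^n f` converges to `∫₀¹ f`
in the sup norm at rate `2^{-n}` times the total variation of `f`. -/
theorem stmt_6 (f : ℝ → ℝ) (hf : Measurable f)
    (hbv : BoundedVariationOn f (Set.Icc 0 1))
    (K : (ℝ → ℝ) → (ℝ → ℝ))
    (hK : ∀ g x, K g x = (g (x / 2) + g ((x + 1) / 2)) / 2) (n : ℕ) :
    eVariationOn (K^[n] f) (Set.Icc 0 1) ≤ (2 : ℝ≥0∞)⁻¹ ^ n * eVariationOn f (Set.Icc 0 1) ∧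
    ∀ x ∈ Set.Icc (0:ℝ) 1,
      |K^[n] f x - ∫ y in (0:ℝ)..1, f y| ≤
        (2:ℝ)⁻¹ ^ n * (eVariationOn f (Set.Icc 0 1)).toReal :=
  stmt_6_general f hbv K hK n
end

section
/- Consider the Markov chain on ℕ with transition probabilities p_{0,n} = 1/(ζ(p+1) n^{p+1}) for n ≥ 1 and p_{n,n−1} = 1 for n ≥ 1, where p > 1. Then the measure π defined by π{n} = ∑_{i≥n} d/i^{p+1} for n ≥ 1 and π{0} = π{1}, with d = 1/ζ(p+1) normalized so that π is a probability measure, is an invariant probability measure for this chain. -/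
open Real

/-!
From every `m ≥ 1` the chain moves deterministically to `m - 1`, so the mass arriving at `n` is
`π{0} K(0, n) + π{n+1}`. For `n ≥ 1` the tail sums satisfy `π{n} = d n^{-(p+1)} + π{n+1}`, and
`π{0} = π{1} = d ζ(p+1)` turns `π{0} K(0, n)` into exactly `d n^{-(p+1)}`; for `n = 0` the
incoming mass is `π{1} = π{0}`.
-/

theorem tsum_mul_eq_of_descent {K : ℕ → ℕ → ℝ}
    (hK : ∀ m n : ℕ, 1 ≤ m → K m n = if n + 1 = m then 1 else 0) (pi : ℕ → ℝ) (n : ℕ) :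
    ∑' m : ℕ, pi m * K m n = pi 0 * K 0 n + pi (n + 1) := by
  have hvanish : ∀ m ∉ ({0, n + 1} : Finset ℕ), pi m * K m n = 0 := by
    intro m hm
    simp only [Finset.mem_insert, Finset.mem_singleton, not_or] at hm
    rw [hK m n (by omega), if_neg (by omega), mul_zero]
  rw [tsum_eq_sum hvanish, Finset.sum_pair (by omega), hK (n + 1) n (by omega), if_pos rfl,
    mul_one]

theorem tsum_nat_add_eq_add_tsum_succ {f : ℕ → ℝ} (hf : Summable f) (m : ℕ) :
    ∑' i : ℕ, f (m + i) = f m + ∑' i : ℕ, f (m + 1 + i) := by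
  have hshift : Summable (fun i => f (m + i)) := hf.comp_injective (add_right_injective m)
  rw [hshift.tsum_eq_zero_add, add_zero]
  simp only [add_assoc, add_comm 1]

theorem stmt_7_general (p : ℝ) (hp : 1 < p) (Z d : ℝ)
    (hZ : Z = ∑' n : ℕ, ((n : ℝ) + 1) ^ (-(p + 1)))
    (K : ℕ → ℕ → ℝ)
    (hK0 : ∀ n : ℕ, K 0 n = if 1 ≤ n then 1 / (Z * (n : ℝ) ^ (p + 1)) else 0)
    (hK : ∀ m n : ℕ, 1 ≤ m → K m n = if n + 1 = m then 1 else 0)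
    (pi : ℕ → ℝ)
    (hpin : ∀ n : ℕ, 1 ≤ n → pi n = ∑' i : ℕ, d * (((n + i : ℕ) : ℝ)) ^ (-(p + 1)))
    (hpi0 : pi 0 = pi 1) :
    ∀ n : ℕ, ∑' m : ℕ, pi m * K m n = pi n := by
  have hsum : Summable (fun i : ℕ => (i : ℝ) ^ (-(p + 1))) :=
    Real.summable_nat_rpow.mpr (by linarith)
  have hZsum : Summable (fun i : ℕ => ((i : ℝ) + 1) ^ (-(p + 1))) := by
    exact_mod_cast (summable_nat_add_iff 1).mpr hsum
  have hZpos : 0 < Z :=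
    hZ ▸ hZsum.tsum_pos (fun i => by positivity) 0 (by positivity)
  have hpi1 : pi 1 = d * Z := by
    rw [hpin 1 le_rfl, tsum_mul_left, hZ]
    congr 1
    exact tsum_congr fun i => by push_cast; ring_nf
  intro n
  rw [tsum_mul_eq_of_descent hK pi n, hK0]
  rcases n with _ | n
  · simp [hpi0]
  · have hn : (0 : ℝ) < (n + 1 : ℕ) := by positivity
    have hstep : pi (n + 1) = d * ((n + 1 : ℕ) : ℝ) ^ (-(p + 1)) + pi (n + 1 + 1) := by
      rw [hpin (n + 1) (by omega), hpin (n + 1 + 1) (by omega)]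
      exact tsum_nat_add_eq_add_tsum_succ (hsum.mul_left d) (n + 1)
    rw [if_pos (by omega), hpi0, hpi1, hstep, Real.rpow_neg hn.le]
    field_simp

/-- The renewal-type Markov chain on ℕ jumping from 0 to n with probability
`1/(ζ(p+1) n^{p+1})` and from n to n−1 with probability 1 has invariant probability measure
`π{n} = ∑_{i≥n} d/i^{p+1}` (n ≥ 1), `π{0} = π{1}`. -/
theorem stmt_7 (p : ℝ) (hp : 1 < p) (Z d : ℝ)
    (hZ : Z = ∑' n : ℕ, ((n : ℝ) + 1) ^ (-(p + 1)))
    (K : ℕ → ℕ → ℝ)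
    (hK0 : ∀ n : ℕ, K 0 n = if 1 ≤ n then 1 / (Z * (n : ℝ) ^ (p + 1)) else 0)
    (hK : ∀ m n : ℕ, 1 ≤ m → K m n = if n + 1 = m then 1 else 0)
    (pi : ℕ → ℝ)
    (hpin : ∀ n : ℕ, 1 ≤ n → pi n = ∑' i : ℕ, d * (((n + i : ℕ) : ℝ)) ^ (-(p + 1)))
    (hpi0 : pi 0 = pi 1)
    (hd : 0 < d) (hnorm : ∑' n : ℕ, pi n = 1) :
    ∀ n : ℕ, ∑' m : ℕ, pi m * K m n = pi n :=
  stmt_7_general p hp Z d hZ K hK0 hK pi hpin hpi0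
end

section
/- Consider the Markov kernel on [0,1] given by K(x, A) = (1−x) δ_x(A) + x ν(A), where ν has density (1+a) y^a with a > 0. Then the probability measure π with density a y^{a−1} on [0,1] is invariant for K. -/
open MeasureTheory Real

/-!
Evaluating the kernel at `x` splits `∫ K(x, A) dπ(x)` into `∫_A (1 - x) dπ(x) + ν(A) ∫ x dπ(x)`.
Since `ν` is the probability measure proportional to `x dπ(x)` (indeed `∫ x dπ = a/(a+1)` and
`a/(a+1) · (1+a) y^a = a y^{a-1} · y`), the second term is `∫_A x dπ(x)`, and the two terms add up
to `π(A)`.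
-/

section DiracMixture

variable {α : Type*} [MeasurableSpace α] {μ ν : Measure α} {p q : α → ENNReal} {A : Set α}

theorem lintegral_smul_dirac_add_smul_apply (hq : Measurable q) (hA : MeasurableSet A) :
    ∫⁻ x, (p x • Measure.dirac x + q x • ν) A ∂μ
      = ∫⁻ x in A, p x ∂μ + (∫⁻ x, q x ∂μ) * ν A := by
  simp only [Measure.coe_add, Pi.add_apply, Measure.smul_apply, smul_eq_mul,
    Measure.dirac_apply' _ hA]
  rw [lintegral_add_right _ (hq.mul_const _), lintegral_mul_const _ hq, ← lintegral_indicator hA]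
  congr 1
  refine lintegral_congr fun x => ?_
  by_cases hx : x ∈ A <;> simp [hx]

theorem lintegral_smul_dirac_add_smul_apply_eq_self (hq : Measurable q)
    (hpq : ∀ᵐ x ∂μ, p x + q x = 1) (hν : (∫⁻ x, q x ∂μ) • ν = μ.withDensity q)
    (hA : MeasurableSet A) :
    ∫⁻ x, (p x • Measure.dirac x + q x • ν) A ∂μ = μ A := by
  have hνA : (∫⁻ x, q x ∂μ) * ν A = ∫⁻ x in A, q x ∂μ := by
    rw [← withDensity_apply _ hA, ← hν, Measure.smul_apply, smul_eq_mul]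
  rw [lintegral_smul_dirac_add_smul_apply hq hA, hνA, ← lintegral_add_right _ hq,
    setLIntegral_congr_fun_ae hA (hpq.mono fun x hx _ => hx), setLIntegral_one]

end DiracMixture

theorem lintegral_Icc_zero_one_ofReal_mul_rpow {b : ℝ} (hb : -1 < b) {c : ℝ} (hc : 0 ≤ c) :
    ∫⁻ y in Set.Icc (0:ℝ) 1, ENNReal.ofReal (c * y ^ b) = ENNReal.ofReal (c / (b + 1)) := by
  have hint : IntegrableOn (fun y : ℝ => c * y ^ b) (Set.Icc 0 1) := by
    rw [integrableOn_Icc_iff_integrableOn_Ioc]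
    exact ((intervalIntegrable_iff_integrableOn_Ioc_of_le zero_le_one).mp
      (intervalIntegral.intervalIntegrable_rpow' hb)).const_mul c
  have hnonneg : 0 ≤ᵐ[volume.restrict (Set.Icc (0:ℝ) 1)] fun y => c * y ^ b :=
    (ae_restrict_mem measurableSet_Icc).mono fun y hy => mul_nonneg hc (rpow_nonneg hy.1 _)
  rw [← ofReal_integral_eq_lintegral_ofReal hint hnonneg, integral_Icc_eq_integral_Ioc,
    ← intervalIntegral.integral_of_le zero_le_one, intervalIntegral.integral_const_mul,
    integral_rpow (Or.inl hb), one_rpow, zero_rpow (by linarith), sub_zero, mul_one_div]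

/-- The probability measure with density `a y^{a−1}` on `[0,1]` is invariant for the kernel
`K(x,·) = (1−x) δ_x + x ν`, where `ν` has density `(1+a) y^a` on `[0,1]`. -/
theorem stmt_13 (a : ℝ) (ha : 0 < a)
    (ν pi : Measure ℝ)
    (hν : ν = (volume.restrict (Set.Icc (0:ℝ) 1)).withDensity
        (fun y => ENNReal.ofReal ((1 + a) * y ^ a)))
    (hpi : pi = (volume.restrict (Set.Icc (0:ℝ) 1)).withDensity
        (fun y => ENNReal.ofReal (a * y ^ (a - 1))))
    (K : ℝ → Measure ℝ)
    (hK : ∀ x, K x = ENNReal.ofReal (1 - x) • Measure.dirac x + ENNReal.ofReal x • ν) :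
    ∀ A : Set ℝ, MeasurableSet A → ∫⁻ x, K x A ∂pi = pi A := by
  intro A hA
  set μ := volume.restrict (Set.Icc (0:ℝ) 1)
  have hq : Measurable fun x : ℝ => ENNReal.ofReal x := ENNReal.measurable_ofReal
  have hdensity : ∀ᵐ y ∂μ, ENNReal.ofReal (a * y ^ (a - 1)) * ENNReal.ofReal y
      = ENNReal.ofReal (a * y ^ a) := by
    filter_upwards [ae_restrict_mem measurableSet_Icc] with y hy
    rw [← ENNReal.ofReal_mul' hy.1, mul_assoc, ← rpow_add_one' hy.1 (by linarith), sub_add_cancel]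
  have hmean : ∫⁻ x, ENNReal.ofReal x ∂pi = ENNReal.ofReal (a / (a + 1)) := by
    rw [hpi, lintegral_withDensity_eq_lintegral_mul _ (by fun_prop) hq]
    exact (lintegral_congr_ae hdensity).trans
      (lintegral_Icc_zero_one_ofReal_mul_rpow (by linarith) ha.le)
  have hnormalised : (∫⁻ x, ENNReal.ofReal x ∂pi) • ν = pi.withDensity ENNReal.ofReal := by
    rw [hmean, hν, hpi, ← withDensity_smul' _ _ ENNReal.ofReal_ne_top,
      ← withDensity_mul _ (by fun_prop) hq]
    refine withDensity_congr_ae (hdensity.mono fun y hy => ?_)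
    rw [Pi.smul_apply, Pi.mul_apply, hy, smul_eq_mul, ← ENNReal.ofReal_mul (by positivity)]
    congr 1
    field_simp
    ring
  have hpq : ∀ᵐ x ∂pi, ENNReal.ofReal (1 - x) + ENNReal.ofReal x = 1 := by
    rw [hpi]
    filter_upwards [withDensity_absolutelyContinuous μ _ (ae_restrict_mem measurableSet_Icc)]
      with x hx
    rw [← ENNReal.ofReal_add (by linarith [hx.2]) hx.1, sub_add_cancel, ENNReal.ofReal_one]
  simp only [hK]
  exact lintegral_smul_dirac_add_smul_apply_eq_self hq hpq hnormalised hA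
end

section
/- Let (τ_i)_{i≥0} be i.i.d. nonnegative integer random variables with P(τ₁ ≥ ℓ) ≤ c ℓ^{−p} for some 1 < p < 2 and c > 0. Then there is a constant C depending only on p and c such that for all n ≥ 1, P(∑_{i=0}^{n−1} (τ_i − E τ_i) ≥ n/2) ≤ C n^{1−p}. -/
/-!
Truncate at level `n`: on the event that no `τ i` with `i < n` reaches `n`, each `τ i` equals
`min (τ i) n`, whose mean is at most `E τ i`. The event where some `τ i ≥ n` has probability at
most `n P(τ₀ ≥ n) ≤ c n^{1-p}` by the union bound. The truncated sum is handled by Chebyshev: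
its variance is at most `n E[min(τ₀, n)²]`, and the tail-sum formula
`E[min(τ₀, n)²] = ∑_{ℓ<n} (2ℓ+1) P(τ₀ > ℓ)` together with the tail bound gives
`E[min(τ₀, n)²] ≤ 2c n^{2-p}/(2-p)`, so the Chebyshev term is `O(n^{1-p})` as well.
-/

open MeasureTheory ProbabilityTheory Real Finset

lemma add_one_rpow_le_integral_rpow {a : ℝ} (ha : -1 < a) (ha' : a ≤ 0) (ℓ : ℕ) :
    ((ℓ : ℝ) + 1) ^ a ≤ ∫ x in (ℓ : ℝ)..ℓ + 1, x ^ a := by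
  calc ((ℓ : ℝ) + 1) ^ a = ∫ _ in (ℓ : ℝ)..ℓ + 1, ((ℓ : ℝ) + 1) ^ a := by simp
    _ ≤ ∫ x in (ℓ : ℝ)..ℓ + 1, x ^ a := by
      -- the open interval avoids `x = 0` (when `ℓ = 0`), where `0 ^ a = 0` for `a < 0`
      refine intervalIntegral.integral_mono_on_of_le_Ioo (by linarith) (by simp)
        (intervalIntegral.intervalIntegrable_rpow' ha) fun x hx => ?_
      have hx0 : 0 < x := lt_of_le_of_lt (Nat.cast_nonneg ℓ) hx.1
      exact rpow_le_rpow_of_nonpos hx0 hx.2.le ha'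

lemma sum_range_add_one_rpow_le {a : ℝ} (ha : -1 < a) (ha' : a ≤ 0) (n : ℕ) :
    ∑ ℓ ∈ range n, ((ℓ : ℝ) + 1) ^ a ≤ (n : ℝ) ^ (a + 1) / (a + 1) := by
  calc ∑ ℓ ∈ range n, ((ℓ : ℝ) + 1) ^ a
      ≤ ∑ ℓ ∈ range n, ∫ x in (ℓ : ℝ)..(ℓ + 1 : ℕ), x ^ a := by
        gcongr with ℓ
        push_cast
        exact add_one_rpow_le_integral_rpow ha ha' ℓ
    _ = (n : ℝ) ^ (a + 1) / (a + 1) := by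
        rw [intervalIntegral.sum_integral_adjacent_intervals
          fun k _ => intervalIntegral.intervalIntegrable_rpow' ha, integral_rpow (Or.inl ha)]
        simp [zero_rpow (by linarith : a + 1 ≠ 0)]

lemma cast_min_sq_eq_sum_range (y n : ℕ) :
    ((min y n : ℕ) : ℝ) ^ 2 = ∑ ℓ ∈ range n, if ℓ < y then 2 * (ℓ : ℝ) + 1 else 0 := by
  induction n with
  | zero => simp
  | succ n ih =>
    rw [sum_range_succ, ← ih]
    split_ifs with h
    · rw [min_eq_right h, min_eq_right h.le]; push_cast; ring
    · rw [min_eq_left (by omega), min_eq_left (by omega)]; ring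

section

variable {Ω : Type*} [MeasurableSpace Ω] {μ : Measure Ω}

lemma integral_cast_min_sq_eq_sum_range [IsFiniteMeasure μ] {Y : Ω → ℕ} (hY : Measurable Y)
    (n : ℕ) :
    ∫ ω, ((min (Y ω) n : ℕ) : ℝ) ^ 2 ∂μ
      = ∑ ℓ ∈ range n, (2 * (ℓ : ℝ) + 1) * μ.real {ω | ℓ < Y ω} := by
  have hset (ℓ : ℕ) : MeasurableSet {ω | ℓ < Y ω} := hY measurableSet_Ioi
  have hind (ℓ : ℕ) (ω : Ω) : (if ℓ < Y ω then 2 * (ℓ : ℝ) + 1 else 0)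
      = {ω | ℓ < Y ω}.indicator (fun _ => 2 * (ℓ : ℝ) + 1) ω := by
    simp [Set.indicator_apply]
  simp_rw [cast_min_sq_eq_sum_range, hind]
  rw [integral_finsetSum _ fun ℓ _ => (integrable_const _).indicator (hset ℓ)]
  refine sum_congr rfl fun ℓ _ => ?_
  rw [integral_indicator_const _ (hset ℓ), smul_eq_mul, mul_comm]

lemma integral_cast_min_sq_le_of_tail_le [IsFiniteMeasure μ] {Y : Ω → ℕ} (hY : Measurable Y)
    {p c : ℝ} (hp1 : 1 ≤ p) (hp2 : p < 2) (hc : 0 ≤ c)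
    (htail : ∀ ℓ : ℕ, 1 ≤ ℓ → μ.real {ω | ℓ ≤ Y ω} ≤ c * (ℓ : ℝ) ^ (-p)) (n : ℕ) :
    ∫ ω, ((min (Y ω) n : ℕ) : ℝ) ^ 2 ∂μ ≤ 2 * c * (n : ℝ) ^ (2 - p) / (2 - p) := by
  have hterm (ℓ : ℕ) :
      (2 * (ℓ : ℝ) + 1) * μ.real {ω | ℓ < Y ω} ≤ 2 * c * ((ℓ : ℝ) + 1) ^ (1 - p) := by
    have h := htail (ℓ + 1) (by omega)
    push_cast at h
    calc (2 * (ℓ : ℝ) + 1) * μ.real {ω | ℓ < Y ω}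
        ≤ 2 * ((ℓ : ℝ) + 1) * (c * ((ℓ : ℝ) + 1) ^ (-p)) :=
          mul_le_mul (by linarith) h measureReal_nonneg (by positivity)
      _ = 2 * c * ((ℓ : ℝ) + 1) ^ (1 - p) := by
          rw [sub_eq_add_neg, rpow_add (by positivity), rpow_one]; ring
  rw [integral_cast_min_sq_eq_sum_range hY]
  calc ∑ ℓ ∈ range n, (2 * (ℓ : ℝ) + 1) * μ.real {ω | ℓ < Y ω}
      ≤ ∑ ℓ ∈ range n, 2 * c * ((ℓ : ℝ) + 1) ^ (1 - p) := sum_le_sum fun ℓ _ => hterm ℓ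
    _ = 2 * c * ∑ ℓ ∈ range n, ((ℓ : ℝ) + 1) ^ (1 - p) := by rw [mul_sum]
    _ ≤ 2 * c * ((n : ℝ) ^ (1 - p + 1) / (1 - p + 1)) := by
        gcongr
        exact sum_range_add_one_rpow_le (by linarith) (by linarith) n
    _ = 2 * c * (n : ℝ) ^ (2 - p) / (2 - p) := by ring_nf

lemma measureReal_sum_sub_integral_ge_le_mul_variance_div_sq [IsProbabilityMeasure μ]
    {X : ℕ → Ω → ℝ} (hX : ∀ i, MemLp (X i) 2 μ)
    (hindep : Pairwise fun i j => IndepFun (X i) (X j) μ)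
    (hident : ∀ i, IdentDistrib (X i) (X 0) μ μ) (n : ℕ) {ε : ℝ} (hε : 0 < ε) :
    μ.real {ω | ε ≤ ∑ i ∈ range n, (X i ω - ∫ ω', X i ω' ∂μ)}
      ≤ n * variance (X 0) μ / ε ^ 2 := by
  set S := ∑ i ∈ range n, X i
  have hS : MemLp S 2 μ := memLp_finsetSum' _ fun i _ => hX i
  have hsub : {ω | ε ≤ ∑ i ∈ range n, (X i ω - ∫ ω', X i ω' ∂μ)}
      ⊆ {ω | ε ≤ |S ω - μ[S]|} := by
    intro ω (hω : ε ≤ _)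
    have hcentered : S ω - μ[S] = ∑ i ∈ range n, (X i ω - ∫ ω', X i ω' ∂μ) := by
      simp only [S, Finset.sum_apply]
      rw [integral_finsetSum _ fun i _ => (hX i).integrable one_le_two, sum_sub_distrib]
    rw [← hcentered] at hω
    exact hω.trans (le_abs_self _)
  have hvar : variance S μ = n * variance (X 0) μ := by
    rw [IndepFun.variance_sum (fun i _ => hX i) fun i _ j _ hij => hindep hij]
    simp [(hident _).variance_eq]
  calc _ ≤ μ.real {ω | ε ≤ |S ω - μ[S]|} := measureReal_mono hsub
    _ ≤ variance S μ / ε ^ 2 :=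
        ENNReal.toReal_le_of_le_ofReal (div_nonneg (variance_nonneg _ _) (sq_nonneg _))
          (meas_ge_le_variance_div_sq hS hε)
    _ = _ := by rw [hvar]

lemma setOf_sum_sub_integral_ge_subset_union_truncated {τ : ℕ → Ω → ℕ}
    (hτ : ∀ i, Integrable (fun ω => (τ i ω : ℝ)) μ) (n u : ℕ) (t : ℝ) :
    {ω | t ≤ ∑ i ∈ range n, ((τ i ω : ℝ) - ∫ ω', (τ i ω' : ℝ) ∂μ)}
      ⊆ (⋃ i ∈ range n, τ i ⁻¹' Set.Ici u) ∪
        {ω | t ≤ ∑ i ∈ range n,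
          (((min (τ i ω) u : ℕ) : ℝ) - ∫ ω', ((min (τ i ω') u : ℕ) : ℝ) ∂μ)} := by
  intro ω (hω : t ≤ _)
  by_cases hbig : ∃ i ∈ range n, u ≤ τ i ω
  · obtain ⟨i, hi, h⟩ := hbig
    exact Or.inl (Set.mem_biUnion hi h)
  push Not at hbig
  refine Or.inr (show t ≤ _ from hω.trans (sum_le_sum fun i hi => ?_))
  have hmono : ∫ ω', ((min (τ i ω') u : ℕ) : ℝ) ∂μ ≤ ∫ ω', (τ i ω' : ℝ) ∂μ :=
    integral_mono_of_nonneg (ae_of_all _ fun _ => Nat.cast_nonneg _) (hτ i)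
      (ae_of_all _ fun _ => Nat.cast_le.mpr (min_le_left _ _))
  rw [min_eq_left (hbig i hi).le]
  linarith

lemma measureReal_biUnion_range_preimage_le [IsFiniteMeasure μ] {α : Type*} [MeasurableSpace α]
    {f : ℕ → Ω → α} (hf : ∀ i, IdentDistrib (f i) (f 0) μ μ) {s : Set α} (hs : MeasurableSet s)
    (n : ℕ) : μ.real (⋃ i ∈ range n, f i ⁻¹' s) ≤ n * μ.real (f 0 ⁻¹' s) :=
  calc _ ≤ ∑ i ∈ range n, μ.real (f i ⁻¹' s) := measureReal_biUnion_finset_le _ _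
    _ = n * μ.real (f 0 ⁻¹' s) := by simp [measureReal_def, (hf _).measure_mem_eq hs]

lemma measureReal_sum_sub_integral_ge_le_of_truncation [IsProbabilityMeasure μ]
    {τ : ℕ → Ω → ℕ} (hindep : Pairwise fun i j => IndepFun (τ i) (τ j) μ)
    (hident : ∀ i, IdentDistrib (τ i) (τ 0) μ μ) (hint : Integrable (fun ω => (τ 0 ω : ℝ)) μ)
    (n u : ℕ) {t : ℝ} (ht : 0 < t) :
    μ.real {ω | t ≤ ∑ i ∈ range n, ((τ i ω : ℝ) - ∫ ω', (τ i ω' : ℝ) ∂μ)}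
      ≤ n * μ.real {ω | u ≤ τ 0 ω} + n * (∫ ω, ((min (τ 0 ω) u : ℕ) : ℝ) ^ 2 ∂μ) / t ^ 2 := by
  set X : ℕ → Ω → ℝ := fun i ω => ((min (τ i ω) u : ℕ) : ℝ)
  have htrunc : Measurable fun k : ℕ => ((min k u : ℕ) : ℝ) := measurable_from_top
  have hXLp (i : ℕ) : MemLp (X i) 2 μ :=
    memLp_of_bounded (a := 0) (b := u)
      (ae_of_all _ fun _ => ⟨Nat.cast_nonneg _, Nat.cast_le.mpr (min_le_right _ _)⟩)
      (htrunc.comp_aemeasurable (hident i).aemeasurable_fst).aestronglyMeasurable 2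
  have hτint (i : ℕ) : Integrable (fun ω => (τ i ω : ℝ)) μ :=
    ((hident i).comp (measurable_from_top (f := fun k : ℕ => (k : ℝ)))).integrable_iff.mpr hint
  calc _ ≤ μ.real (⋃ i ∈ range n, τ i ⁻¹' Set.Ici u)
        + μ.real {ω | t ≤ ∑ i ∈ range n, (X i ω - ∫ ω', X i ω' ∂μ)} :=
        (measureReal_mono (setOf_sum_sub_integral_ge_subset_union_truncated hτint n u t)).trans
          (measureReal_union_le _ _)
    _ ≤ n * μ.real {ω | u ≤ τ 0 ω} + n * variance (X 0) μ / t ^ 2 :=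
        add_le_add (measureReal_biUnion_range_preimage_le hident measurableSet_Ici n)
          (measureReal_sum_sub_integral_ge_le_mul_variance_div_sq hXLp
            (fun i j hij => (hindep hij).comp htrunc htrunc) (fun i => (hident i).comp htrunc)
            n ht)
    _ ≤ _ := by
        gcongr
        exact variance_le_expectation_sq (hXLp 0).1

end

/-- For i.i.d. nonnegative integer variables with tail `P(τ ≥ ℓ) ≤ c ℓ^{−p}`, `1 < p < 2`,
one has `P(∑_{i<n} (τ_i − Eτ_i) ≥ n/2) ≤ C n^{1−p}`. -/
theorem stmt_17 (p c : ℝ) (hp : p ∈ Set.Ioo (1:ℝ) 2) (hc : 0 < c) :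
    ∃ C : ℝ, 0 < C ∧
      ∀ (Ω : Type) [MeasurableSpace Ω] (μ : Measure Ω), IsProbabilityMeasure μ →
      ∀ (τ : ℕ → Ω → ℕ),
        (∀ i, Measurable (τ i)) →
        iIndepFun τ μ →
        (∀ i, μ.map (τ i) = μ.map (τ 0)) →
        Integrable (fun ω => (τ 0 ω : ℝ)) μ →
        (∀ ℓ : ℕ, 1 ≤ ℓ → (μ {ω | ℓ ≤ τ 0 ω}).toReal ≤ c * (ℓ : ℝ) ^ (-p)) →
        ∀ n : ℕ, 1 ≤ n →
          (μ {ω | (n : ℝ) / 2 ≤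
              ∑ i ∈ Finset.range n, ((τ i ω : ℝ) - ∫ ω', (τ i ω' : ℝ) ∂μ)}).toReal
            ≤ C * (n : ℝ) ^ (1 - p) := by
  obtain ⟨hp1, hp2⟩ := hp
  have h2p : 0 < 2 - p := by linarith
  refine ⟨c + 8 * c / (2 - p), by positivity, ?_⟩
  intro Ω _ μ _ τ hmeas hindep hident hint htail n hn
  have hn' : (0 : ℝ) < n := by exact_mod_cast hn
  have hτ (i : ℕ) : IdentDistrib (τ i) (τ 0) μ μ :=
    ⟨(hmeas i).aemeasurable, (hmeas 0).aemeasurable, hident i⟩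
  calc _ ≤ n * μ.real {ω | n ≤ τ 0 ω}
        + n * (∫ ω, ((min (τ 0 ω) n : ℕ) : ℝ) ^ 2 ∂μ) / ((n : ℝ) / 2) ^ 2 :=
        measureReal_sum_sub_integral_ge_le_of_truncation (fun i j hij => hindep.indepFun hij)
          hτ hint n n (by positivity)
    _ ≤ n * (c * (n : ℝ) ^ (-p))
        + n * (2 * c * (n : ℝ) ^ (2 - p) / (2 - p)) / ((n : ℝ) / 2) ^ 2 := by
        gcongr
        · exact htail n hn
        · exact integral_cast_min_sq_le_of_tail_le (hmeas 0) hp1.le hp2 hc.le htail n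
    _ = (c + 8 * c / (2 - p)) * (n : ℝ) ^ (1 - p) := by
        rw [show -p = 1 - p - 1 by ring, show 2 - p = 1 - p + 1 by ring,
          rpow_sub_one hn'.ne', rpow_add_one hn'.ne']
        field_simp
        ring
end
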